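/- arXiv:2504.15423 — 3 statements merged into one kernel-verified Lean document; each statement's English description precedes it below -/
import Mathlib

section
/- Let T ≥ 0, let h : ℝⁿ → ℝ be continuous, let x : ℝ → ℝⁿ be continuous on [0,T] with h(x(0)) > 0, and let B : ℝ → ℝ satisfy B(η) → ∞ as η → 0⁺ (limit along the filter of positive reals approaching 0). Suppose there exists M ∈ ℝ such that for every t ∈ [0,T] with h(x(t)) > 0 one has B(h(x(t))) ≤ M. Then h(x(t)) > 0 for every t ∈ [0,T]; i.e., the trajectory remains in the safe set on [0,T]. -/
open Set Filter

/-- If the trajectory starts safe, `B` blows up at `0⁺`, and the barrier value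
`B (h (x t))` is bounded above (whenever the state is safe), then the trajectory remains in
the safe set on `[0,T]`. -/
theorem safe_of_barrier_bounded {n : ℕ} (T : ℝ) (hT : 0 ≤ T)
    (h : EuclideanSpace ℝ (Fin n) → ℝ) (hh : Continuous h)
    (x : ℝ → EuclideanSpace ℝ (Fin n)) (hx : ContinuousOn x (Icc 0 T))
    (hx0 : 0 < h (x 0))
    (B : ℝ → ℝ) (hB : Tendsto B (nhdsWithin 0 (Ioi (0 : ℝ))) atTop)
    (hbd : ∃ M : ℝ, ∀ t ∈ Icc (0 : ℝ) T, 0 < h (x t) → B (h (x t)) ≤ M) :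
    ∀ t ∈ Icc (0 : ℝ) T, 0 < h (x t) := by
  obtain ⟨M, hM⟩ := hbd
  -- choose η > 0 such that B s > M for all s ∈ (0, η)
  have : ∀ᶠ s in nhdsWithin 0 (Ioi (0:ℝ)), M < B s := hB.eventually (eventually_gt_atTop M)
  obtain ⟨η, hη, hηB⟩ := (nhdsGT_basis_of_exists_gt (⟨1, by norm_num⟩ : ∃ b, (0:ℝ) < b)).eventually_iff.mp this
  -- hence for all t ∈ [0,T] with 0 < h(x t), we have η ≤ h(x t)
  have key : ∀ t ∈ Icc (0:ℝ) T, 0 < h (x t) → η ≤ h (x t) := by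
    intro t ht hpos
    by_contra hlt
    push_neg at hlt
    exact absurd (hM t ht hpos) (not_le.mpr (hηB ⟨hpos, hlt⟩))
  have hg : ContinuousOn (fun t => h (x t)) (Icc 0 T) := hh.comp_continuousOn hx
  have h0 : η ≤ h (x 0) := key 0 ⟨le_refl 0, hT⟩ hx0
  intro t ht
  by_contra hnp
  push_neg at hnp
  -- IVT: the value η/2 is attained on [0, t]
  have hsub : Icc 0 t ⊆ Icc 0 T := Icc_subset_Icc le_rfl ht.2
  have hIVT := intermediate_value_Icc' ht.1 (hg.mono hsub)
  have hmem : η / 2 ∈ Icc (h (x t)) (h (x 0)) :=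
    ⟨le_trans hnp (by linarith), by linarith⟩
  obtain ⟨s, hs, hseq⟩ := hIVT hmem
  simp only at hseq
  have hspos : 0 < h (x s) := by rw [hseq]; linarith
  have := key s (hsub hs) hspos
  rw [hseq] at this
  linarith
end

section
/- Let E = ℝⁿ and P = ℝᵖ (as Euclidean spaces with their inner products). Let V : E × P → ℝ be differentiable, with partial gradients ∇₁V(x̄,θ̂) ∈ E and ∇₂V(x̄,θ̂) ∈ P. Let f̄ : E → E, ḡ : E → (ℝᵐ →ₗ E), F̄ : E → (P →ₗ E), K : E × P → ℝᵐ, let Γ : P →ₗ P be self-adjoint and invertible, let θ ∈ P be fixed, and let α₁ : ℝ → ℝ. Define ϑ(x̄,θ̂) := θ̂ + Γ(∇₂V(x̄,θ̂)) and τ(x̄,θ̂) := (F̄ x̄)†(∇₁V(x̄,θ̂)) (the adjoint of F̄ x̄ applied to ∇₁V). Assume the BaS-aCLF inequality: for all (x̄,θ̂), ⟪∇₁V(x̄,θ̂), f̄(x̄) + ḡ(x̄)(K(x̄,θ̂)) + F̄(x̄)(ϑ(x̄,θ̂))⟫ ≤ −α₁(‖x̄‖). Let x̄ : ℝ → E and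 θ̂ : ℝ → P be differentiable curves satisfying the closed-loop dynamics x̄'(t) = f̄(x̄ t) + ḡ(x̄ t)(K(x̄ t, θ̂ t)) + F̄(x̄ t) θ and θ̂'(t) = Γ(τ(x̄ t, θ̂ t)) for all t. Then the composite function W(t) := V(x̄ t, θ̂ t) + ½⟪θ − θ̂ t, Γ⁻¹(θ − θ̂ t)⟫ is differentiable and satisfies W'(t) ≤ −α₁(‖x̄ t‖) for every t. -/
open scoped RealInnerProductSpace

/-- Along the closed-loop trajectories of the safety embedded system with
BaS-aCLF `V`, the composite Lyapunov function
`W t = V (x̄ t, θ̂ t) + ½⟪θ - θ̂ t, Γ⁻¹ (θ - θ̂ t)⟫` is differentiable and satisfies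
`W' t ≤ -α₁ ‖x̄ t‖`. -/
theorem composite_lyapunov_decrease {n p m : ℕ}
    (V : EuclideanSpace ℝ (Fin n) × EuclideanSpace ℝ (Fin p) → ℝ)
    (gradx : EuclideanSpace ℝ (Fin n) × EuclideanSpace ℝ (Fin p) → EuclideanSpace ℝ (Fin n))
    (gradθ : EuclideanSpace ℝ (Fin n) × EuclideanSpace ℝ (Fin p) → EuclideanSpace ℝ (Fin p))
    (hV : ∀ q : EuclideanSpace ℝ (Fin n) × EuclideanSpace ℝ (Fin p),
      HasFDerivAt V
        ((innerSL ℝ (gradx q)).comp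
            (ContinuousLinearMap.fst ℝ (EuclideanSpace ℝ (Fin n)) (EuclideanSpace ℝ (Fin p))) +
          (innerSL ℝ (gradθ q)).comp
            (ContinuousLinearMap.snd ℝ (EuclideanSpace ℝ (Fin n)) (EuclideanSpace ℝ (Fin p)))) q)
    (fbar : EuclideanSpace ℝ (Fin n) → EuclideanSpace ℝ (Fin n))
    (gbar : EuclideanSpace ℝ (Fin n) → EuclideanSpace ℝ (Fin m) →ₗ[ℝ] EuclideanSpace ℝ (Fin n))
    (Fbar : EuclideanSpace ℝ (Fin n) → EuclideanSpace ℝ (Fin p) →ₗ[ℝ] EuclideanSpace ℝ (Fin n))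
    (K : EuclideanSpace ℝ (Fin n) × EuclideanSpace ℝ (Fin p) → EuclideanSpace ℝ (Fin m))
    (Γ : EuclideanSpace ℝ (Fin p) ≃ₗ[ℝ] EuclideanSpace ℝ (Fin p))
    (hΓ : LinearMap.IsSymmetric (Γ : EuclideanSpace ℝ (Fin p) →ₗ[ℝ] EuclideanSpace ℝ (Fin p)))
    (θ : EuclideanSpace ℝ (Fin p))
    (α₁ : ℝ → ℝ)
    -- the modified parameter and the adaptation function
    (ϑ : EuclideanSpace ℝ (Fin n) × EuclideanSpace ℝ (Fin p) → EuclideanSpace ℝ (Fin p))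
    (hϑ : ∀ q, ϑ q = q.2 + Γ (gradθ q))
    (τ : EuclideanSpace ℝ (Fin n) × EuclideanSpace ℝ (Fin p) → EuclideanSpace ℝ (Fin p))
    (hτ : ∀ q, τ q = LinearMap.adjoint (Fbar q.1) (gradx q))
    -- BaS-aCLF inequality
    (hCLF : ∀ q : EuclideanSpace ℝ (Fin n) × EuclideanSpace ℝ (Fin p),
      ⟪gradx q, fbar q.1 + gbar q.1 (K q) + Fbar q.1 (ϑ q)⟫ ≤ -α₁ ‖q.1‖)
    -- closed-loop trajectories
    (xbar : ℝ → EuclideanSpace ℝ (Fin n)) (θhat : ℝ → EuclideanSpace ℝ (Fin p))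
    (hx : ∀ t : ℝ, HasDerivAt xbar
      (fbar (xbar t) + gbar (xbar t) (K (xbar t, θhat t)) + Fbar (xbar t) θ) t)
    (hθ : ∀ t : ℝ, HasDerivAt θhat (Γ (τ (xbar t, θhat t))) t)
    (W : ℝ → ℝ)
    (hW : ∀ t : ℝ, W t = V (xbar t, θhat t)
      + (1 / 2) * ⟪θ - θhat t, Γ.symm (θ - θhat t)⟫) :
    ∀ t : ℝ, ∃ W' : ℝ, HasDerivAt W W' t ∧ W' ≤ -α₁ ‖xbar t‖ := by
  intro t
  set q : EuclideanSpace ℝ (Fin n) × EuclideanSpace ℝ (Fin p) := (xbar t, θhat t) with hq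
  set a := gradx q
  set b := gradθ q
  set x' := fbar (xbar t) + gbar (xbar t) (K (xbar t, θhat t)) + Fbar (xbar t) θ
  set θ' := Γ (τ (xbar t, θhat t))
  -- derivative of V along the trajectory
  have hqd : HasDerivAt (fun s => (xbar s, θhat s)) (x', θ') t := (hx t).prodMk (hθ t)
  have hVq : HasDerivAt (fun s => V (xbar s, θhat s)) (⟪a, x'⟫ + ⟪b, θ'⟫) t := by
    have := (hV q).comp_hasDerivAt t hqd
    simpa [Function.comp_def] using this
  -- derivative of the quadratic term
  have hu : HasDerivAt (fun s => θ - θhat s) (-θ') t := by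
    simpa [Pi.sub_def] using (hasDerivAt_const t θ).sub (hθ t)
  have hsymmCLM : HasDerivAt (fun s => Γ.symm (θ - θhat s)) (Γ.symm (-θ')) t := by
    exact (LinearMap.toContinuousLinearMap
      (Γ.symm : EuclideanSpace ℝ (Fin p) →ₗ[ℝ] EuclideanSpace ℝ (Fin p))).hasFDerivAt.comp_hasDerivAt t hu
  have hquad : HasDerivAt (fun s => ⟪θ - θhat s, Γ.symm (θ - θhat s)⟫)
      (⟪θ - θhat t, Γ.symm (-θ')⟫ + ⟪-θ', Γ.symm (θ - θhat t)⟫) t :=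
    HasDerivAt.inner ℝ hu hsymmCLM
  -- symmetry of Γ.symm
  have hΓ' : ∀ x y : EuclideanSpace ℝ (Fin p), ⟪Γ x, y⟫ = ⟪x, Γ y⟫ := fun x y => by
    simpa using hΓ x y
  have hΓs : ∀ x y : EuclideanSpace ℝ (Fin p), ⟪Γ.symm x, y⟫ = ⟪x, Γ.symm y⟫ := fun x y => by
    simpa using (hΓ (Γ.symm x) (Γ.symm y)).symm
  set u := θ - θhat t with hu_def
  have hW' : HasDerivAt W ((⟪a, x'⟫ + ⟪b, θ'⟫) + (1/2) * (⟪u, Γ.symm (-θ')⟫ + ⟪-θ', Γ.symm u⟫)) t := by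
    have : HasDerivAt (fun s => V (xbar s, θhat s) + (1/2) * ⟪θ - θhat s, Γ.symm (θ - θhat s)⟫)
        ((⟪a, x'⟫ + ⟪b, θ'⟫) + (1/2) * (⟪u, Γ.symm (-θ')⟫ + ⟪-θ', Γ.symm u⟫)) t :=
      hVq.add (hquad.const_mul (1/2))
    exact this.congr_of_eventuallyEq (Filter.Eventually.of_forall fun s => (hW s))
  refine ⟨_, hW', ?_⟩
  -- now the algebra
  have h1 : ⟪u, Γ.symm (-θ')⟫ = ⟪-θ', Γ.symm u⟫ := by
    rw [← hΓs u (-θ'), real_inner_comm]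
  have h2 : ⟪-θ', Γ.symm u⟫ = -⟪a, Fbar (xbar t) u⟫ :=
    calc ⟪-θ', Γ.symm u⟫ = -⟪Γ (τ q), Γ.symm u⟫ := by rw [inner_neg_left]
      _ = -⟪τ q, Γ (Γ.symm u)⟫ := by rw [hΓ']
      _ = -⟪τ q, u⟫ := by rw [Γ.apply_symm_apply]
      _ = -⟪LinearMap.adjoint (Fbar q.1) (gradx q), u⟫ := by rw [hτ]
      _ = -⟪gradx q, Fbar q.1 u⟫ := by rw [LinearMap.adjoint_inner_left]
      _ = -⟪a, Fbar (xbar t) u⟫ := rfl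
  have h3 : ⟪b, θ'⟫ = ⟪a, Fbar (xbar t) (Γ b)⟫ :=
    calc ⟪b, θ'⟫ = ⟪Γ (τ q), b⟫ := real_inner_comm _ _
      _ = ⟪τ q, Γ b⟫ := by rw [hΓ']
      _ = ⟪LinearMap.adjoint (Fbar q.1) (gradx q), Γ b⟫ := by rw [hτ]
      _ = ⟪gradx q, Fbar q.1 (Γ b)⟫ := by rw [LinearMap.adjoint_inner_left]
      _ = ⟪a, Fbar (xbar t) (Γ b)⟫ := rfl
  have key := hCLF q
  rw [hϑ q] at key
  calc (⟪a, x'⟫ + ⟪b, θ'⟫) + (1/2) * (⟪u, Γ.symm (-θ')⟫ + ⟪-θ', Γ.symm u⟫)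
      = ⟪a, x'⟫ + ⟪a, Fbar (xbar t) (Γ b)⟫ - ⟪a, Fbar (xbar t) u⟫ := by
        rw [h1, h2, h3]; ring
    _ = ⟪a, fbar (xbar t) + gbar (xbar t) (K q) + Fbar (xbar t) (θhat t + Γ b)⟫ := by
        simp only [x', hu_def, map_add, map_sub, inner_add_right, inner_sub_right]
        ring
    _ ≤ -α₁ ‖xbar t‖ := key
end

section
/- Let T ≥ 0, let h : ℝⁿ → ℝ be continuous, let x : ℝ → ℝⁿ be continuous on [0,T] with h(x(0)) > 0, let B : ℝ → ℝ satisfy B(η) → ∞ as η → 0⁺, and let β⁰ ∈ ℝ. Let α : ℝ → ℝ be continuous, strictly monotone increasing on [0,∞), with α(0) = 0 and α(r) → ∞ as r → ∞, and let W : ℝ → ℝ be nonincreasing on [0,T]. Suppose that for every t ∈ [0,T] with h(x(t)) > 0 one has α(|B(h(x(t))) − β⁰|) ≤ W(t). Then h(x(t)) > 0 for every t ∈ [0,T]; i.e., the trajectory remains in the safe set throughout [0,T]. -/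
open Set Filter
open Topology

/-- Trajectory-level safety from a nonincreasing function dominating a class K∞
function of the barrier state: if `W` is nonincreasing on `[0,T]` and
`α |B (h (x t)) - β⁰| ≤ W t` whenever the state is safe, then a trajectory starting in the
safe set remains in the safe set throughout `[0,T]`. -/
theorem safety_from_dominated_barrier_state {n : ℕ} (T : ℝ) (hT : 0 ≤ T)
    (h : EuclideanSpace ℝ (Fin n) → ℝ) (hh : Continuous h)
    (x : ℝ → EuclideanSpace ℝ (Fin n)) (hx : ContinuousOn x (Icc 0 T))
    (hx0 : 0 < h (x 0))
    (B : ℝ → ℝ) (hB : Tendsto B (nhdsWithin 0 (Ioi (0 : ℝ))) atTop)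
    (β0 : ℝ)
    (α : ℝ → ℝ) (hαcont : ContinuousOn α (Ici (0 : ℝ)))
    (hαmono : StrictMonoOn α (Ici (0 : ℝ))) (hα0 : α 0 = 0)
    (hαtop : Tendsto α atTop atTop)
    (W : ℝ → ℝ) (hW : AntitoneOn W (Icc (0 : ℝ) T))
    (hdom : ∀ t ∈ Icc (0 : ℝ) T, 0 < h (x t) → α |B (h (x t)) - β0| ≤ W t) :
    ∀ t ∈ Icc (0 : ℝ) T, 0 < h (x t) := by
  by_contra hcon
  push_neg at hcon
  set f : ℝ → ℝ := fun t => h (x t) with hf_def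
  have hf : ContinuousOn f (Icc 0 T) := hh.comp_continuousOn hx
  set S : Set ℝ := {t ∈ Icc (0:ℝ) T | f t ≤ 0} with hS_def
  have hSne : S.Nonempty := by
    obtain ⟨t, ht, hft⟩ := hcon
    exact ⟨t, ht, hft⟩
  have hSclosed : IsClosed S := by
    have : S = Icc (0:ℝ) T ∩ f ⁻¹' (Iic 0) := by
      ext t
      simp only [hS_def, Set.mem_setOf_eq, Set.mem_inter_iff, Set.mem_preimage,
        Set.mem_Iic]
    rw [this]
    exact hf.preimage_isClosed_of_isClosed isClosed_Icc isClosed_Iic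
  have hSbdd : BddBelow S := ⟨0, fun t ht => ht.1.1⟩
  set c := sInf S with hc_def
  have hcS : c ∈ S := hSclosed.csInf_mem hSne hSbdd
  have hcIcc : c ∈ Icc (0:ℝ) T := hcS.1
  have hfc : f c ≤ 0 := hcS.2
  have hc0 : 0 < c := by
    rcases lt_or_eq_of_le hcIcc.1 with h' | h'
    · exact h'
    · exact absurd hfc (by rw [← h']; exact not_le.2 hx0)
  -- on [0, c), f > 0
  have hpos : ∀ t ∈ Ico (0:ℝ) c, 0 < f t := by
    intro t ht
    by_contra hle
    exact absurd (csInf_le hSbdd ⟨⟨ht.1, le_trans ht.2.le hcIcc.2⟩, le_of_not_gt hle⟩)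
      (not_le.2 ht.2)
  have hIcoSub : Ico (0:ℝ) c ⊆ Icc 0 T := fun t ht => ⟨ht.1, le_trans ht.2.le hcIcc.2⟩
  haveI hNB : (𝓝[Ico (0:ℝ) c] c).NeBot := by
    rw [← mem_closure_iff_nhdsWithin_neBot, closure_Ico hc0.ne]
    exact ⟨hc0.le, le_rfl⟩
  have hfcwa : Tendsto f (𝓝[Ico (0:ℝ) c] c) (𝓝 (f c)) :=
    ((hf c hcIcc).mono hIcoSub).tendsto
  -- f c = 0
  have hfc0 : f c = 0 := by
    refine le_antisymm hfc ?_
    refine ge_of_tendsto hfcwa ?_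
    filter_upwards [self_mem_nhdsWithin] with t ht using (hpos t ht).le
  -- B ∘ f tends to atTop along 𝓝[Ico 0 c] c
  have hBf : Tendsto (fun t => B (f t)) (𝓝[Ico (0:ℝ) c] c) atTop := by
    refine hB.comp ?_
    rw [tendsto_nhdsWithin_iff]
    constructor
    · rw [hfc0] at hfcwa; exact hfcwa
    · filter_upwards [self_mem_nhdsWithin] with t ht using hpos t ht
  -- bound: pick M with α r ≥ W 0 + 1 for r ≥ M
  obtain ⟨M, hM⟩ := Filter.eventually_atTop.1 (hαtop.eventually_ge_atTop (W 0 + 1))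
  have hbd : ∀ t ∈ Ico (0:ℝ) c, B (f t) ≤ β0 + M := by
    intro t ht
    by_contra hgt
    push_neg at hgt
    have habs : M ≤ |B (f t) - β0| := le_trans (by linarith) (le_abs_self _)
    have h1 : W 0 + 1 ≤ α |B (f t) - β0| := hM _ habs
    have h2 : α |B (f t) - β0| ≤ W t := hdom t (hIcoSub ht) (hpos t ht)
    have h3 : W t ≤ W 0 := hW ⟨le_rfl, hT⟩ (hIcoSub ht) ht.1
    linarith
  have := (hBf.eventually_gt_atTop (β0 + M)).and self_mem_nhdsWithin
  obtain ⟨t, h1, h2⟩ := this.exists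
  exact absurd (hbd t h2) (not_le.2 h1)
end
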